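/- Let X, Y ∈ B(H) satisfy |X + Y| = |X| + |Y|, and let X = V|X|, Y = W|Y| be polar decompositions with V*V|X| = |X| and W*W|Y| = |Y|. Then |X|(V*W - I)|Y| + |Y|(W*V - I)|X| = 0; equivalently, the operator i|X|(V*W - I)|Y| is selfadjoint. -/

import Mathlib

open ContinuousLinearMap

variable {H : Type*} [NormedAddCommGroup H] [InnerProductSpace ℂ H] [CompleteSpace H]

/-- `U` is a partial isometry iff `U*U` is an (orthogonal) projection. -/
def IsPartialIsometry (U : H →L[ℂ] H) : Prop :=
  IsIdempotentElem (adjoint U * U)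

/-- Absolute value `|X| = (X*X)^(1/2)`. -/
noncomputable def opAbs (X : H →L[ℂ] H) : H →L[ℂ] H :=
  CFC.sqrt (adjoint X * X)

set_option synthInstance.maxHeartbeats 1000000 in
lemma opAbs_sa (X : H →L[ℂ] H) : IsSelfAdjoint (opAbs X) :=
  IsSelfAdjoint.of_nonneg (CFC.sqrt_nonneg _)

lemma opAbs_sq (X : H →L[ℂ] H) : opAbs X * opAbs X = adjoint X * X := by
  have h0 : (0 : H →L[ℂ] H) ≤ adjoint X * X := by
    simpa [star_eq_adjoint] using star_mul_self_nonneg X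
  exact CFC.sqrt_mul_sqrt_self _ h0

theorem stmt8 (X Y V W : H →L[ℂ] H)
    (h : opAbs (X + Y) = opAbs X + opAbs Y)
    (hV : IsPartialIsometry V) (hW : IsPartialIsometry W)
    (hX : X = V * opAbs X) (hY : Y = W * opAbs Y)
    (hV' : adjoint V * V * opAbs X = opAbs X) (hW' : adjoint W * W * opAbs Y = opAbs Y) :
    opAbs X * (adjoint V * W - 1) * opAbs Y + opAbs Y * (adjoint W * V - 1) * opAbs X = 0 ∧
      IsSelfAdjoint (Complex.I • (opAbs X * (adjoint V * W - 1) * opAbs Y)) := by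
  have hsq : (adjoint X + adjoint Y) * (X + Y)
      = (opAbs X + opAbs Y) * (opAbs X + opAbs Y) := by
    have := congrArg (fun T => T * T) h
    rw [opAbs_sq, map_add] at this
    exact this
  have hXadj : adjoint X = opAbs X * adjoint V := by
    conv_lhs => rw [hX]
    rw [← star_eq_adjoint, star_mul, (opAbs_sa X).star_eq, star_eq_adjoint]
  have hYadj : adjoint Y = opAbs Y * adjoint W := by
    conv_lhs => rw [hY]
    rw [← star_eq_adjoint, star_mul, (opAbs_sa Y).star_eq, star_eq_adjoint]
  have hXY : adjoint X * Y = opAbs X * (adjoint V * W) * opAbs Y := by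
    rw [hXadj]; conv_lhs => rw [hY]
    noncomm_ring
  have hYX : adjoint Y * X = opAbs Y * (adjoint W * V) * opAbs X := by
    rw [hYadj]; conv_lhs => rw [hX]
    noncomm_ring
  have key : opAbs X * (adjoint V * W) * opAbs Y + opAbs Y * (adjoint W * V) * opAbs X
      = opAbs X * opAbs Y + opAbs Y * opAbs X := by
    rw [← hXY, ← hYX]
    have e1 : adjoint X * Y + adjoint Y * X
        = (adjoint X + adjoint Y) * (X + Y) - adjoint X * X - adjoint Y * Y := by
      noncomm_ring
    rw [e1, hsq, ← opAbs_sq X, ← opAbs_sq Y]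
    noncomm_ring
  have goal1 : opAbs X * (adjoint V * W - 1) * opAbs Y
      + opAbs Y * (adjoint W * V - 1) * opAbs X = 0 := by
    calc opAbs X * (adjoint V * W - 1) * opAbs Y + opAbs Y * (adjoint W * V - 1) * opAbs X
        = (opAbs X * (adjoint V * W) * opAbs Y + opAbs Y * (adjoint W * V) * opAbs X)
          - (opAbs X * opAbs Y + opAbs Y * opAbs X) := by noncomm_ring
      _ = 0 := by rw [key]; simp
  refine ⟨goal1, ?_⟩
  have hstar : star (opAbs X * (adjoint V * W - 1) * opAbs Y)
      = opAbs Y * (adjoint W * V - 1) * opAbs X := by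
    rw [star_mul, star_mul, star_sub, star_one, star_mul,
      (opAbs_sa X).star_eq, (opAbs_sa Y).star_eq,
      ← star_eq_adjoint, ← star_eq_adjoint, star_star, star_eq_adjoint]
    noncomm_ring
  have hneg : star (opAbs X * (adjoint V * W - 1) * opAbs Y)
      = -(opAbs X * (adjoint V * W - 1) * opAbs Y) := by
    rw [hstar, ← neg_eq_of_add_eq_zero_right goal1]
  rw [IsSelfAdjoint, star_smul, hneg, Complex.star_def, Complex.conj_I,
    neg_smul, smul_neg, neg_neg]
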